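/- Let Γ = (S,A) and Γ' = (S',A') be skew-symmetric graphs over 𝔽 with decloned graphs Γ̄ = (S̄,Ā) and Γ̄' = (S̄',Ā'), and LV decloning maps LV(p), LV(p'). If φ : LV(Γ) → LV(Γ') is a surjective LV morphism, then there exists a unique linear map φ̄ : 𝔽^{S̄} → 𝔽^{S̄'} such that LV(p') ∘ φ = φ̄ ∘ LV(p), and this φ̄ is a surjective LV morphism from LV(Γ̄) to LV(Γ̄'). -/
import Mathlib


open scoped BigOperators

attribute [local instance] Classical.propDecidable

/-- The relation identifying vertices of a skew-symmetric graph having identical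
rows of the adjacency matrix: `s ~ t` iff `A s u = A t u` for all `u`. -/
def skewRel {𝔽 S : Type*} (A : S → S → 𝔽) (s t : S) : Prop :=
  ∀ u, A s u = A t u

/-- The setoid on the vertex set used for decloning. -/
def declSetoid {𝔽 S : Type*} (A : S → S → 𝔽) : Setoid S :=
  ⟨skewRel A, ⟨fun _ _ => rfl, fun h u => (h u).symm, fun h₁ h₂ u => (h₁ u).trans (h₂ u)⟩⟩

/-- The adjacency matrix of the decloned graph. -/
def declAdj {𝔽 : Type*} [RCLike 𝔽] {S : Type*} (A : S → S → 𝔽)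
    (hA : ∀ s t, A s t = -A t s) :
    Quotient (declSetoid A) → Quotient (declSetoid A) → 𝔽 :=
  Quotient.lift₂ A fun s t s' t' hs ht => by
    have h₁ : A s t = A s' t := hs t
    have h₂ : A s' t = A s' t' := by rw [hA s' t, ht s', ← hA s' t']
    exact h₁.trans h₂

/-- The weight of the decloned graph: the number of clones of a vertex. -/
noncomputable def declWeight {𝔽 S : Type*} (A : S → S → 𝔽)
    (q : Quotient (declSetoid A)) : ℕ :=
  Nat.card {t : S // Quotient.mk (declSetoid A) t = q}

/-- A graph morphism between skew-symmetric graphs. -/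
def IsGraphMorphism {𝔽 S S' : Type*} (A : S → S → 𝔽) (A' : S' → S' → 𝔽) (Φ : S → S') : Prop :=
  ∀ s t, A' (Φ s) (Φ t) = A s t

/-- A (linear) morphism of Lotka-Volterra systems: a linear map which is a Poisson map for the
quadratic Poisson structures attached to `A`, `A'` and which preserves the Hamiltonians. -/
def IsLVMorphism {𝔽 : Type*} [RCLike 𝔽] {S S' : Type*} [Fintype S] [Fintype S']
    (A : S → S → 𝔽) (A' : S' → S' → 𝔽) (φ : (S → 𝔽) →ₗ[𝔽] (S' → 𝔽)) : Prop :=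
  (∀ u v, ∀ x : S → 𝔽,
      ∑ s, ∑ t, A s t * φ (Pi.single s 1) u * φ (Pi.single t 1) v * x s * x t
        = A' u v * φ x u * φ x v) ∧
  ∀ x : S → 𝔽, ∑ u, φ x u = ∑ s, x s

/-- The linear extension of a map between vertex sets: `(lvExt 𝔽 Φ x) u = ∑_{s : Φ s = u} x s`. -/
noncomputable def lvExt (𝔽 : Type*) [RCLike 𝔽] {S S' : Type*} [Fintype S] (Φ : S → S') :
    (S → 𝔽) →ₗ[𝔽] (S' → 𝔽) where
  toFun x := fun u => ∑ s, if Φ s = u then x s else 0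
  map_add' x y := by
    funext u
    simp only [Pi.add_apply]
    rw [← Finset.sum_add_distrib]
    refine Finset.sum_congr rfl fun s _ => ?_
    by_cases h : Φ s = u <;> simp [h]
  map_smul' c x := by
    funext u
    simp only [Pi.smul_apply, RingHom.id_apply, smul_eq_mul, Finset.mul_sum]
    refine Finset.sum_congr rfl fun s _ => ?_
    by_cases h : Φ s = u <;> simp [h]


attribute [local instance 1100] Classical.propDecidable
set_option linter.unusedSectionVars false
set_option maxHeartbeats 2000000

set_option linter.unusedSectionVars false
set_option maxHeartbeats 1000000

section Aux
variable {𝔽 S S' : Type*} [RCLike 𝔽] [Fintype S] [Fintype S']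

lemma diag_zero (A : S → S → 𝔽) (hA : ∀ s t, A s t = -A t s) (s : S) : A s s = 0 := by
  linear_combination (hA s s) / 2

lemma phi_apply (φ : (S → 𝔽) →ₗ[𝔽] (S' → 𝔽)) (x : S → 𝔽) (u : S') :
    φ x u = ∑ r, x r * φ (Pi.single r 1) u := by
  have hx : x = ∑ r, x r • (Pi.single r 1 : S → 𝔽) := by
    funext s
    simp [Pi.single_apply, Finset.sum_ite_eq']
  conv_lhs => rw [hx]
  rw [map_sum]
  simp [Finset.sum_apply]

lemma sumsum_single (f : S → S → 𝔽) (a b : S) :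
    ∑ s, ∑ t, f s t * (Pi.single a 1 : S → 𝔽) s * (Pi.single b 1 : S → 𝔽) t = f a b := by
  simp [Pi.single_apply, mul_ite, ite_mul, Finset.sum_ite_eq']

lemma F0 (A : S → S → 𝔽) (A' : S' → S' → 𝔽) (hA : ∀ s t, A s t = -A t s)
    (φ : (S → 𝔽) →ₗ[𝔽] (S' → 𝔽)) (hφ : IsLVMorphism A A' φ) (u v : S') (a : S) :
    A' u v * φ (Pi.single a 1) u * φ (Pi.single a 1) v = 0 := by
  have h := hφ.1 u v (Pi.single a 1)
  rw [sumsum_single (fun s t => A s t * φ (Pi.single s 1) u * φ (Pi.single t 1) v) a a] at h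
  simp only [diag_zero A hA a, zero_mul] at h
  exact h.symm

-- (**) : L5
lemma PP (A : S → S → 𝔽) (A' : S' → S' → 𝔽) (hA : ∀ s t, A s t = -A t s)
    (φ : (S → 𝔽) →ₗ[𝔽] (S' → 𝔽)) (hφ : IsLVMorphism A A' φ) (u v : S') (a b : S) :
    A a b * (φ (Pi.single a 1) u * φ (Pi.single b 1) v - φ (Pi.single b 1) u * φ (Pi.single a 1) v)
      = A' u v * (φ (Pi.single a 1) u * φ (Pi.single b 1) v + φ (Pi.single b 1) u * φ (Pi.single a 1) v) := by
  have h := hφ.1 u v (Pi.single a 1 + Pi.single b 1)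
  have expand : ∀ s t : S,
      A s t * φ (Pi.single s 1) u * φ (Pi.single t 1) v *
        (Pi.single a 1 + Pi.single b 1 : S → 𝔽) s * (Pi.single a 1 + Pi.single b 1 : S → 𝔽) t
      = A s t * φ (Pi.single s 1) u * φ (Pi.single t 1) v * (Pi.single a 1 : S → 𝔽) s * (Pi.single a 1 : S → 𝔽) t
      + A s t * φ (Pi.single s 1) u * φ (Pi.single t 1) v * (Pi.single a 1 : S → 𝔽) s * (Pi.single b 1 : S → 𝔽) t
      + A s t * φ (Pi.single s 1) u * φ (Pi.single t 1) v * (Pi.single b 1 : S → 𝔽) s * (Pi.single a 1 : S → 𝔽) t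
      + A s t * φ (Pi.single s 1) u * φ (Pi.single t 1) v * (Pi.single b 1 : S → 𝔽) s * (Pi.single b 1 : S → 𝔽) t := by
    intro s t; simp only [Pi.add_apply]; ring
  simp only [expand, Finset.sum_add_distrib] at h
  rw [sumsum_single (fun s t => A s t * φ (Pi.single s 1) u * φ (Pi.single t 1) v) a a,
      sumsum_single (fun s t => A s t * φ (Pi.single s 1) u * φ (Pi.single t 1) v) a b,
      sumsum_single (fun s t => A s t * φ (Pi.single s 1) u * φ (Pi.single t 1) v) b a,
      sumsum_single (fun s t => A s t * φ (Pi.single s 1) u * φ (Pi.single t 1) v) b b] at h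
  simp only [diag_zero A hA, zero_mul, map_add, Pi.add_apply] at h
  have h0a := F0 A A' hA φ hφ u v a
  have h0b := F0 A A' hA φ hφ u v b
  linear_combination h + h0a + h0b - (φ (Pi.single b 1) u * φ (Pi.single a 1) v) * hA b a
end Aux

section Aux2
variable {𝔽 S S' : Type*} [RCLike 𝔽] [Fintype S] [Fintype S']

lemma Rr (A : S → S → 𝔽) (A' : S' → S' → 𝔽) (hA : ∀ s t, A s t = -A t s)
    (φ : (S → 𝔽) →ₗ[𝔽] (S' → 𝔽)) (hφ : IsLVMorphism A A' φ)
    (s t : S) (hst : skewRel A s t) (r : S) (u v : S') :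
    A s r * ((φ (Pi.single s 1) u - φ (Pi.single t 1) u) * φ (Pi.single r 1) v
        - φ (Pi.single r 1) u * (φ (Pi.single s 1) v - φ (Pi.single t 1) v))
      = A' u v * ((φ (Pi.single s 1) u - φ (Pi.single t 1) u) * φ (Pi.single r 1) v
        + φ (Pi.single r 1) u * (φ (Pi.single s 1) v - φ (Pi.single t 1) v)) := by
  have h1 := PP A A' hA φ hφ u v s r
  have h2 := PP A A' hA φ hφ u v t r
  linear_combination h1 - h2 - (φ (Pi.single t 1) u * φ (Pi.single r 1) v
    - φ (Pi.single r 1) u * φ (Pi.single t 1) v) * hst r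

lemma Rx (A : S → S → 𝔽) (A' : S' → S' → 𝔽) (hA : ∀ s t, A s t = -A t s)
    (φ : (S → 𝔽) →ₗ[𝔽] (S' → 𝔽)) (hφ : IsLVMorphism A A' φ)
    (s t : S) (hst : skewRel A s t) (u v : S') (x : S → 𝔽) :
    ∑ r, A s r * ((φ (Pi.single s 1) u - φ (Pi.single t 1) u) * φ (Pi.single r 1) v
        - φ (Pi.single r 1) u * (φ (Pi.single s 1) v - φ (Pi.single t 1) v)) * x r
      = A' u v * ((φ (Pi.single s 1) u - φ (Pi.single t 1) u) * φ x v
        + φ x u * (φ (Pi.single s 1) v - φ (Pi.single t 1) v)) := by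
  rw [phi_apply φ x u, phi_apply φ x v]
  simp only [mul_add, add_mul, Finset.mul_sum, Finset.sum_mul]
  rw [← Finset.sum_add_distrib]
  refine Finset.sum_congr rfl fun r _ => ?_
  linear_combination x r * Rr A A' hA φ hφ s t hst r u v

lemma sum_y (A : S → S → 𝔽) (A' : S' → S' → 𝔽)
    (φ : (S → 𝔽) →ₗ[𝔽] (S' → 𝔽)) (hφ : IsLVMorphism A A' φ) (s t : S) :
    ∑ u, (φ (Pi.single s 1) u - φ (Pi.single t 1) u) = 0 := by
  rw [Finset.sum_sub_distrib, hφ.2 (Pi.single s 1), hφ.2 (Pi.single t 1)]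
  simp [Pi.single_apply, Finset.sum_ite_eq']

lemma step0 (A : S → S → 𝔽) (A' : S' → S' → 𝔽) (hA : ∀ s t, A s t = -A t s)
    (φ : (S → 𝔽) →ₗ[𝔽] (S' → 𝔽)) (hφ : IsLVMorphism A A' φ)
    (s t : S) (hst : skewRel A s t) (a b : S')
    (ha : φ (Pi.single s 1) a - φ (Pi.single t 1) a ≠ 0)
    (hb : φ (Pi.single s 1) b - φ (Pi.single t 1) b ≠ 0) :
    A' a b = 0 := by
  by_contra hab
  have hdisj : ∀ r : S, φ (Pi.single r 1) a * φ (Pi.single r 1) b = 0 := by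
    intro r
    have h := F0 A A' hA φ hφ a b r
    have h' : A' a b * (φ (Pi.single r 1) a * φ (Pi.single r 1) b) = 0 := by
      linear_combination h
    exact (mul_eq_zero.mp h').resolve_left hab
  have hAts : A t s = 0 := by rw [← hst s]; exact diag_zero A hA s
  have key := PP A A' hA φ hφ a b t s
  rw [hAts, zero_mul] at key
  have hsum : φ (Pi.single t 1) a * φ (Pi.single s 1) b
      + φ (Pi.single s 1) a * φ (Pi.single t 1) b = 0 :=
    (mul_eq_zero.mp key.symm).resolve_left hab
  by_cases hBas : φ (Pi.single s 1) a = 0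
  · have hBat : φ (Pi.single t 1) a ≠ 0 := by
      intro h; exact ha (by rw [hBas, h, sub_zero])
    have hBbt : φ (Pi.single t 1) b = 0 :=
      (mul_eq_zero.mp (hdisj t)).resolve_left hBat
    have h2 : φ (Pi.single t 1) a * φ (Pi.single s 1) b = 0 := by
      rw [hBas] at hsum; simpa using hsum
    have hBbs : φ (Pi.single s 1) b = 0 := (mul_eq_zero.mp h2).resolve_left hBat
    exact hb (by rw [hBbs, hBbt, sub_zero])
  · have hBbs : φ (Pi.single s 1) b = 0 := (mul_eq_zero.mp (hdisj s)).resolve_left hBas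
    have h2 : φ (Pi.single s 1) a * φ (Pi.single t 1) b = 0 := by
      rw [hBbs] at hsum; simpa using hsum
    have hBbt : φ (Pi.single t 1) b = 0 := (mul_eq_zero.mp h2).resolve_left hBas
    exact hb (by rw [hBbs, hBbt, sub_zero])

lemma rows_eq (A : S → S → 𝔽) (A' : S' → S' → 𝔽) (hA : ∀ s t, A s t = -A t s)
    (φ : (S → 𝔽) →ₗ[𝔽] (S' → 𝔽)) (hφ : IsLVMorphism A A' φ)
    (hsurj : Function.Surjective φ)
    (s t : S) (hst : skewRel A s t) (a b : S')
    (ha : φ (Pi.single s 1) a - φ (Pi.single t 1) a ≠ 0)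
    (hb : φ (Pi.single s 1) b - φ (Pi.single t 1) b ≠ 0)
    (w : S') : A' a w = A' b w := by
  by_cases hyw : φ (Pi.single s 1) w - φ (Pi.single t 1) w = 0
  · obtain ⟨x, hx⟩ := hsurj (Pi.single w 1)
    have hwa : a ≠ w := fun h => ha (h ▸ hyw)
    have hwb : b ≠ w := fun h => hb (h ▸ hyw)
    have cancel : ∀ c : S', c ≠ w → (φ (Pi.single s 1) c - φ (Pi.single t 1) c ≠ 0) →
        A' c w = ∑ r, A s r * φ (Pi.single r 1) w * x r := by
      intro c hcw hc
      have key := Rx A A' hA φ hφ s t hst c w x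
      rw [hx, hyw] at key
      simp only [mul_zero, sub_zero, zero_mul, add_zero] at key
      rw [Pi.single_eq_same] at key
      have lhs_eq : ∑ r, A s r * ((φ (Pi.single s 1) c - φ (Pi.single t 1) c) * φ (Pi.single r 1) w) * x r
          = (∑ r, A s r * φ (Pi.single r 1) w * x r) * (φ (Pi.single s 1) c - φ (Pi.single t 1) c) := by
        rw [Finset.sum_mul]
        exact Finset.sum_congr rfl fun r _ => by ring
      rw [lhs_eq] at key
      have : A' c w * (φ (Pi.single s 1) c - φ (Pi.single t 1) c)
          = (∑ r, A s r * φ (Pi.single r 1) w * x r) * (φ (Pi.single s 1) c - φ (Pi.single t 1) c) := by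
        linear_combination -key
      exact mul_right_cancel₀ hc this
    rw [cancel a hwa ha, cancel b hwb hb]
  · rw [step0 A A' hA φ hφ s t hst a w ha hyw, step0 A A' hA φ hφ s t hst b w hb hyw]

lemma KL1 (A : S → S → 𝔽) (A' : S' → S' → 𝔽) (hA : ∀ s t, A s t = -A t s)
    (φ : (S → 𝔽) →ₗ[𝔽] (S' → 𝔽)) (hφ : IsLVMorphism A A' φ)
    (hsurj : Function.Surjective φ)
    (s t : S) (hst : skewRel A s t) (q : Quotient (declSetoid A')) :
    ∑ u, (if Quotient.mk (declSetoid A') u = q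
      then (φ (Pi.single s 1) u - φ (Pi.single t 1) u) else 0) = 0 := by
  by_cases hall : ∀ u, φ (Pi.single s 1) u - φ (Pi.single t 1) u = 0
  · exact Finset.sum_eq_zero fun u _ => by simp [hall u]
  push_neg at hall
  obtain ⟨a, ha⟩ := hall
  have hclass : ∀ u, φ (Pi.single s 1) u - φ (Pi.single t 1) u ≠ 0 →
      (Quotient.mk (declSetoid A') u) = Quotient.mk (declSetoid A') a := by
    intro u hu
    exact Quotient.sound fun w => rows_eq A A' hA φ hφ hsurj s t hst u a hu ha w
  by_cases hq : q = Quotient.mk (declSetoid A') a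
  · have : ∀ u ∈ Finset.univ, (if Quotient.mk (declSetoid A') u = q
        then (φ (Pi.single s 1) u - φ (Pi.single t 1) u) else 0)
        = φ (Pi.single s 1) u - φ (Pi.single t 1) u := by
      intro u _
      by_cases h : Quotient.mk (declSetoid A') u = q
      · simp [h]
      · have h0 : φ (Pi.single s 1) u - φ (Pi.single t 1) u = 0 := by
          by_contra h'
          exact h ((hclass u h').trans hq.symm)
        simp [h, h0]
    rw [Finset.sum_congr rfl this]
    exact sum_y A A' φ hφ s t
  · refine Finset.sum_eq_zero fun u _ => ?_
    by_cases h : Quotient.mk (declSetoid A') u = q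
    · have h0 : φ (Pi.single s 1) u - φ (Pi.single t 1) u = 0 := by
        by_contra h'
        exact hq ((h.symm.trans (hclass u h')))
      simp [h, h0]
    · simp [h]
end Aux2

set_option linter.unusedSectionVars false
set_option maxHeartbeats 1000000

section Aux3
variable {𝔽 S S' : Type*} [RCLike 𝔽] [Fintype S] [Fintype S']

/-- a linear section of the decloning map -/
noncomputable def sect (𝔽 : Type*) [RCLike 𝔽] {S : Type*} [Fintype S] (St : Setoid S) :
    (Quotient St → 𝔽) →ₗ[𝔽] (S → 𝔽) where
  toFun X := fun s => if s = (Quotient.mk St s).out then X (Quotient.mk St s) else 0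
  map_add' X Y := by
    funext s
    show (if s = (Quotient.mk St s).out then (X + Y) (Quotient.mk St s) else 0)
      = (if s = (Quotient.mk St s).out then X (Quotient.mk St s) else 0)
        + (if s = (Quotient.mk St s).out then Y (Quotient.mk St s) else 0)
    by_cases h : s = (Quotient.mk St s).out
    · rw [if_pos h, if_pos h, if_pos h, Pi.add_apply]
    · rw [if_neg h, if_neg h, if_neg h, add_zero]
  map_smul' c X := by
    funext s
    show (if s = (Quotient.mk St s).out then (c • X) (Quotient.mk St s) else 0)
      = c • (if s = (Quotient.mk St s).out then X (Quotient.mk St s) else 0)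
    by_cases h : s = (Quotient.mk St s).out
    · rw [if_pos h, if_pos h, Pi.smul_apply]
    · rw [if_neg h, if_neg h, smul_zero]

lemma sect_section (St : Setoid S) (X : Quotient St → 𝔽) :
    lvExt 𝔽 (Quotient.mk St) (sect 𝔽 St X) = X := by
  funext q
  have goal_eq : (lvExt 𝔽 (Quotient.mk St)) ((sect 𝔽 St) X) q
      = ∑ s, (if Quotient.mk St s = q then
        (if s = (Quotient.mk St s).out then X (Quotient.mk St s) else 0) else 0) := by
    simp only [lvExt, sect, LinearMap.coe_mk, AddHom.coe_mk]
  rw [goal_eq, Finset.sum_eq_single q.out]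
  · rw [Quotient.out_eq]
    simp
  · intro s _ hs
    by_cases h1 : Quotient.mk St s = q
    · have h2 : s ≠ (Quotient.mk St s).out := by rw [h1]; exact hs
      rw [if_pos h1, if_neg h2]
    · rw [if_neg h1]
  · intro h; exact absurd (Finset.mem_univ _) h

lemma sumP (f : S → S') (z : S → 𝔽) :
    ∑ u : S', ∑ s, (if f s = u then z s else 0) = ∑ s, z s := by
  rw [Finset.sum_comm]
  refine Finset.sum_congr rfl fun s _ => ?_
  simp [Finset.sum_ite_eq, Finset.sum_ite_eq']

lemma ker_decomp (A : S → S → 𝔽) (x : S → 𝔽)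
    (hx : ∀ q, ∑ u, (if Quotient.mk (declSetoid A) u = q then x u else 0) = 0) :
    x = ∑ s, x s • ((Pi.single s 1 : S → 𝔽)
      - Pi.single (Quotient.mk (declSetoid A) s).out 1) := by
  have h1 : x = ∑ s, x s • (Pi.single s 1 : S → 𝔽) := by
    funext s
    simp [Pi.single_apply, Finset.sum_ite_eq']
  have h2 : ∑ s, x s • (Pi.single (Quotient.mk (declSetoid A) s).out 1 : S → 𝔽) = 0 := by
    have step : ∑ s, x s • (Pi.single (Quotient.mk (declSetoid A) s).out 1 : S → 𝔽)
        = ∑ q : Quotient (declSetoid A), (∑ s, if Quotient.mk (declSetoid A) s = q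
            then x s else 0) • (Pi.single q.out 1 : S → 𝔽) := by
      have e : ∀ q : Quotient (declSetoid A),
          (∑ s, if Quotient.mk (declSetoid A) s = q then x s else 0)
              • (Pi.single q.out 1 : S → 𝔽)
          = ∑ s, (if Quotient.mk (declSetoid A) s = q
              then x s • (Pi.single q.out 1 : S → 𝔽) else 0) := by
        intro q
        rw [Finset.sum_smul]
        refine Finset.sum_congr rfl fun s _ => ?_
        by_cases h : Quotient.mk (declSetoid A) s = q <;> simp [h]
      simp only [e]
      rw [Finset.sum_comm]
      refine Finset.sum_congr rfl fun s _ => ?_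
      rw [Finset.sum_ite_eq]
      simp
    rw [step]
    refine Finset.sum_eq_zero fun q _ => ?_
    rw [hx q, zero_smul]
  calc x = ∑ s, x s • (Pi.single s 1 : S → 𝔽)
        - ∑ s, x s • (Pi.single (Quotient.mk (declSetoid A) s).out 1 : S → 𝔽) := by
        rw [h2, sub_zero]; exact h1
    _ = ∑ s, x s • ((Pi.single s 1 : S → 𝔽)
          - Pi.single (Quotient.mk (declSetoid A) s).out 1) := by
        rw [← Finset.sum_sub_distrib]
        exact Finset.sum_congr rfl fun s _ => (smul_sub _ _ _).symm

lemma key_ker (A : S → S → 𝔽) (A' : S' → S' → 𝔽)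
    (hA : ∀ s t, A s t = -A t s)
    (φ : (S → 𝔽) →ₗ[𝔽] (S' → 𝔽)) (hφ : IsLVMorphism A A' φ)
    (hsurj : Function.Surjective φ) (x : S → 𝔽)
    (hx : ∀ q, ∑ u, (if Quotient.mk (declSetoid A) u = q then x u else 0) = 0) :
    ∀ q', ∑ u, (if Quotient.mk (declSetoid A') u = q' then φ x u else 0) = 0 := by
  intro q'
  have hdec := ker_decomp A x hx
  have step1 : ∑ u, (if Quotient.mk (declSetoid A') u = q' then φ x u else 0)
      = ∑ u, ∑ s, (if Quotient.mk (declSetoid A') u = q' then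
          x s • (φ (Pi.single s 1) u
            - φ (Pi.single (Quotient.mk (declSetoid A) s).out 1) u) else 0) := by
    refine Finset.sum_congr rfl fun u _ => ?_
    by_cases h : Quotient.mk (declSetoid A') u = q'
    · simp only [if_pos h]
      conv_lhs => rw [hdec]
      rw [map_sum, Finset.sum_apply]
      refine Finset.sum_congr rfl fun s _ => ?_
      rw [map_smul, map_sub]
      simp
    · simp [h]
  rw [step1, Finset.sum_comm]
  refine Finset.sum_eq_zero fun s _ => ?_
  have hst : skewRel A s (Quotient.mk (declSetoid A) s).out := by
    have h := Quotient.exact (Quotient.out_eq (Quotient.mk (declSetoid A) s))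
    exact fun u => (h u).symm
  have hk := KL1 A A' hA φ hφ hsurj s (Quotient.mk (declSetoid A) s).out hst q'
  have pull : ∑ u, (if Quotient.mk (declSetoid A') u = q' then
      x s • (φ (Pi.single s 1) u
        - φ (Pi.single (Quotient.mk (declSetoid A) s).out 1) u) else 0)
      = x s • ∑ u, (if Quotient.mk (declSetoid A') u = q' then
          (φ (Pi.single s 1) u
            - φ (Pi.single (Quotient.mk (declSetoid A) s).out 1) u) else 0) := by
    rw [Finset.smul_sum]
    refine Finset.sum_congr rfl fun u _ => ?_
    by_cases h : Quotient.mk (declSetoid A') u = q' <;> simp [h]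
  rw [pull, hk, smul_zero]
end Aux3

set_option linter.unusedSectionVars false
set_option maxHeartbeats 1000000

section Aux4
variable {𝔽 S S' : Type*} [RCLike 𝔽] [Fintype S] [Fintype S']

lemma lvExt_apply (f : S → S') (x : S → 𝔽) (u : S') :
    lvExt 𝔽 f x u = ∑ s, if f s = u then x s else 0 := by
  simp only [lvExt, LinearMap.coe_mk, AddHom.coe_mk]

lemma lvExt_single (f : S → S') (a : S) :
    lvExt 𝔽 f (Pi.single a 1) = Pi.single (f a) 1 := by
  funext u
  rw [lvExt_apply]
  have e : ∀ s, (if f s = u then (Pi.single a 1 : S → 𝔽) s else 0)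
      = if s = a then (if f a = u then (1:𝔽) else 0) else 0 := by
    intro s
    by_cases h : s = a
    · subst h; simp [Pi.single_eq_same]
    · simp [h, Pi.single_eq_of_ne h]
  rw [Finset.sum_congr rfl fun s _ => e s, Finset.sum_ite_eq']
  simp only [Finset.mem_univ, if_true]
  by_cases h : f a = u
  · subst h; simp
  · simp [h, Pi.single_eq_of_ne (Ne.symm h)]

lemma sum_fiber (f : S → S') (g : S' → 𝔽) (x : S → 𝔽) :
    ∑ u, g u * lvExt 𝔽 f x u = ∑ s, g (f s) * x s := by
  have e : ∀ u, g u * lvExt 𝔽 f x u = ∑ s, if f s = u then g u * x s else 0 := by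
    intro u
    rw [lvExt_apply, Finset.mul_sum]
    exact Finset.sum_congr rfl fun s _ => by by_cases h : f s = u <;> simp [h]
  rw [Finset.sum_congr rfl fun u _ => e u, Finset.sum_comm]
  refine Finset.sum_congr rfl fun s _ => ?_
  simp [Finset.sum_ite_eq, Finset.sum_ite_eq']

lemma sum_fiber2 (f : S → S') (g : S' → S' → 𝔽) (x : S → 𝔽) :
    ∑ u, ∑ v, g u v * lvExt 𝔽 f x u * lvExt 𝔽 f x v
      = ∑ s, ∑ t, g (f s) (f t) * x s * x t := by
  have e1 : ∀ u, ∑ v, g u v * lvExt 𝔽 f x u * lvExt 𝔽 f x v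
      = ∑ t, g u (f t) * lvExt 𝔽 f x u * x t := by
    intro u
    have := sum_fiber f (fun v => g u v * lvExt 𝔽 f x u) x
    calc ∑ v, g u v * lvExt 𝔽 f x u * lvExt 𝔽 f x v
        = ∑ v, (fun v => g u v * lvExt 𝔽 f x u) v * lvExt 𝔽 f x v := rfl
      _ = ∑ t, (fun v => g u v * lvExt 𝔽 f x u) (f t) * x t := sum_fiber f _ x
      _ = ∑ t, g u (f t) * lvExt 𝔽 f x u * x t := rfl
  rw [Finset.sum_congr rfl fun u _ => e1 u, Finset.sum_comm]
  have e2 : ∀ t, ∑ u, g u (f t) * lvExt 𝔽 f x u * x t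
      = ∑ s, (g (f s) (f t) * x t) * x s := by
    intro t
    have e3 : ∀ u, g u (f t) * lvExt 𝔽 f x u * x t
        = (fun u => g u (f t) * x t) u * lvExt 𝔽 f x u := fun u => by ring
    rw [Finset.sum_congr rfl fun u _ => e3 u, sum_fiber f _ x]
  rw [Finset.sum_congr rfl fun t _ => e2 t, Finset.sum_comm]
  exact Finset.sum_congr rfl fun s _ => Finset.sum_congr rfl fun t _ => by ring

lemma declAdj_mk (A : S → S → 𝔽) (hA : ∀ s t, A s t = -A t s) (s t : S) :
    declAdj A hA (Quotient.mk (declSetoid A) s) (Quotient.mk (declSetoid A) t) = A s t := rfl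

lemma C_eq (A : S → S → 𝔽) (A' : S' → S' → 𝔽) (hA : ∀ s t, A s t = -A t s)
    (φ : (S → 𝔽) →ₗ[𝔽] (S' → 𝔽)) (hφ : IsLVMorphism A A' φ)
    (hsurj : Function.Surjective φ) (s s' : S) (hss' : skewRel A s s')
    (q : Quotient (declSetoid A')) :
    (∑ u, if Quotient.mk (declSetoid A') u = q then φ (Pi.single s 1) u else 0)
      = ∑ u, if Quotient.mk (declSetoid A') u = q then φ (Pi.single s' 1) u else 0 := by
  have h := KL1 A A' hA φ hφ hsurj s s' hss' q
  have e : ∀ u, (if Quotient.mk (declSetoid A') u = q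
        then (φ (Pi.single s 1) u - φ (Pi.single s' 1) u) else 0)
      = (if Quotient.mk (declSetoid A') u = q then φ (Pi.single s 1) u else 0)
        - (if Quotient.mk (declSetoid A') u = q then φ (Pi.single s' 1) u else 0) := by
    intro u; by_cases hc : Quotient.mk (declSetoid A') u = q <;> simp [hc]
  rw [Finset.sum_congr rfl fun u _ => e u, Finset.sum_sub_distrib] at h
  exact sub_eq_zero.mp h
end Aux4

set_option linter.unusedSectionVars false
set_option maxHeartbeats 2000000

section Aux5
variable {𝔽 S S' : Type*} [RCLike 𝔽] [Fintype S] [Fintype S']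

lemma declAdj_mk' (A' : S' → S' → 𝔽) (hA' : ∀ s t, A' s t = -A' t s) (u v : S') :
    declAdj A' hA' (Quotient.mk (declSetoid A') u) (Quotient.mk (declSetoid A') v) = A' u v := rfl

lemma cond_i (A : S → S → 𝔽) (A' : S' → S' → 𝔽)
    (hA : ∀ s t, A s t = -A t s) (hA' : ∀ s t, A' s t = -A' t s)
    (φ : (S → 𝔽) →ₗ[𝔽] (S' → 𝔽)) (hφ : IsLVMorphism A A' φ)
    (hsurj : Function.Surjective φ)
    (c c' : Quotient (declSetoid A')) (x : S → 𝔽) :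
    ∑ q, ∑ q'', declAdj A hA q q''
        * (∑ u, if Quotient.mk (declSetoid A') u = c
            then φ (Pi.single (Quotient.out q) 1) u else 0)
        * (∑ v, if Quotient.mk (declSetoid A') v = c'
            then φ (Pi.single (Quotient.out q'') 1) v else 0)
        * lvExt 𝔽 (Quotient.mk (declSetoid A)) x q
        * lvExt 𝔽 (Quotient.mk (declSetoid A)) x q''
      = declAdj A' hA' c c'
        * (∑ u, if Quotient.mk (declSetoid A') u = c then φ x u else 0)
        * (∑ v, if Quotient.mk (declSetoid A') v = c' then φ x v else 0) := by
  rw [sum_fiber2 (Quotient.mk (declSetoid A))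
    (fun q q'' => declAdj A hA q q''
      * (∑ u, if Quotient.mk (declSetoid A') u = c
          then φ (Pi.single (Quotient.out q) 1) u else 0)
      * (∑ v, if Quotient.mk (declSetoid A') v = c'
          then φ (Pi.single (Quotient.out q'') 1) v else 0)) x]
  -- identify the coefficients over representatives
  have hrep : ∀ s : S, skewRel A s (Quotient.out (Quotient.mk (declSetoid A) s)) := by
    intro s
    have h := Quotient.exact (Quotient.out_eq (Quotient.mk (declSetoid A) s))
    exact fun u => (h u).symm
  have e0 : ∀ s t : S,
      declAdj A hA (Quotient.mk (declSetoid A) s) (Quotient.mk (declSetoid A) t)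
        * (∑ u, if Quotient.mk (declSetoid A') u = c
            then φ (Pi.single (Quotient.out (Quotient.mk (declSetoid A) s)) 1) u else 0)
        * (∑ v, if Quotient.mk (declSetoid A') v = c'
            then φ (Pi.single (Quotient.out (Quotient.mk (declSetoid A) t)) 1) v else 0)
        * x s * x t
      = A s t
        * (∑ u, if Quotient.mk (declSetoid A') u = c then φ (Pi.single s 1) u else 0)
        * (∑ v, if Quotient.mk (declSetoid A') v = c' then φ (Pi.single t 1) v else 0)
        * x s * x t := by
    intro s t
    rw [declAdj_mk A hA s t,
      ← C_eq A A' hA φ hφ hsurj s (Quotient.out (Quotient.mk (declSetoid A) s)) (hrep s) c,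
      ← C_eq A A' hA φ hφ hsurj t (Quotient.out (Quotient.mk (declSetoid A) t)) (hrep t) c']
  rw [Finset.sum_congr rfl fun s _ => Finset.sum_congr rfl fun t _ => e0 s t]
  -- expand the products of sums into quadruple sums
  have e4 : ∀ s t : S,
      A s t
        * (∑ u, if Quotient.mk (declSetoid A') u = c then φ (Pi.single s 1) u else 0)
        * (∑ v, if Quotient.mk (declSetoid A') v = c' then φ (Pi.single t 1) v else 0)
        * x s * x t
      = ∑ u, ∑ v, (if Quotient.mk (declSetoid A') u = c then φ (Pi.single s 1) u else 0)
          * (if Quotient.mk (declSetoid A') v = c' then φ (Pi.single t 1) v else 0)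
          * (A s t * x s * x t) := by
    intro s t
    have h1 : A s t
        * (∑ u, if Quotient.mk (declSetoid A') u = c then φ (Pi.single s 1) u else 0)
        * (∑ v, if Quotient.mk (declSetoid A') v = c' then φ (Pi.single t 1) v else 0)
        * x s * x t
      = ((∑ u, if Quotient.mk (declSetoid A') u = c then φ (Pi.single s 1) u else 0)
          * (∑ v, if Quotient.mk (declSetoid A') v = c' then φ (Pi.single t 1) v else 0))
          * (A s t * x s * x t) := by ring
    rw [h1, Finset.sum_mul_sum, Finset.sum_mul]
    exact Finset.sum_congr rfl fun u _ => by rw [Finset.sum_mul]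
  rw [Finset.sum_congr rfl fun s _ => Finset.sum_congr rfl fun t _ => e4 s t]
  -- swap sums: (s,t,u,v) → (u,v,s,t)
  rw [show (∑ s, ∑ t, ∑ u, ∑ v,
      (if Quotient.mk (declSetoid A') u = c then φ (Pi.single s 1) u else 0)
        * (if Quotient.mk (declSetoid A') v = c' then φ (Pi.single t 1) v else 0)
        * (A s t * x s * x t))
    = ∑ u, ∑ v, ∑ s, ∑ t,
      (if Quotient.mk (declSetoid A') u = c then φ (Pi.single s 1) u else 0)
        * (if Quotient.mk (declSetoid A') v = c' then φ (Pi.single t 1) v else 0)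
        * (A s t * x s * x t) from by
    rw [show ∀ (F : S → S → S' → S' → 𝔽), (∑ s, ∑ t, ∑ u, ∑ v, F s t u v)
        = ∑ u, ∑ v, ∑ s, ∑ t, F s t u v from fun F => by
      calc ∑ s, ∑ t, ∑ u, ∑ v, F s t u v
          = ∑ s, ∑ u, ∑ t, ∑ v, F s t u v :=
            Finset.sum_congr rfl fun s _ => Finset.sum_comm
        _ = ∑ u, ∑ s, ∑ t, ∑ v, F s t u v := Finset.sum_comm
        _ = ∑ u, ∑ s, ∑ v, ∑ t, F s t u v :=
            Finset.sum_congr rfl fun u _ =>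
              Finset.sum_congr rfl fun s _ => Finset.sum_comm
        _ = ∑ u, ∑ v, ∑ s, ∑ t, F s t u v :=
            Finset.sum_congr rfl fun u _ => Finset.sum_comm]]
  -- expand the right-hand side too
  have e5 : declAdj A' hA' c c'
      * (∑ u, if Quotient.mk (declSetoid A') u = c then φ x u else 0)
      * (∑ v, if Quotient.mk (declSetoid A') v = c' then φ x v else 0)
      = ∑ u, ∑ v, (if Quotient.mk (declSetoid A') u = c then φ x u else 0)
          * (if Quotient.mk (declSetoid A') v = c' then φ x v else 0)
          * declAdj A' hA' c c' := by
    have h1 : declAdj A' hA' c c'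
        * (∑ u, if Quotient.mk (declSetoid A') u = c then φ x u else 0)
        * (∑ v, if Quotient.mk (declSetoid A') v = c' then φ x v else 0)
      = ((∑ u, if Quotient.mk (declSetoid A') u = c then φ x u else 0)
          * (∑ v, if Quotient.mk (declSetoid A') v = c' then φ x v else 0))
          * declAdj A' hA' c c' := by ring
    rw [h1, Finset.sum_mul_sum, Finset.sum_mul]
    exact Finset.sum_congr rfl fun u _ => by rw [Finset.sum_mul]
  rw [e5]
  -- now compare term by term
  refine Finset.sum_congr rfl fun u _ => Finset.sum_congr rfl fun v _ => ?_
  by_cases h1 : Quotient.mk (declSetoid A') u = c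
  · by_cases h2 : Quotient.mk (declSetoid A') v = c'
    · simp only [if_pos h1, if_pos h2]
      have key := hφ.1 u v x
      have hAd : declAdj A' hA' c c' = A' u v := by rw [← h1, ← h2, declAdj_mk' A' hA']
      rw [hAd]
      calc ∑ s, ∑ t, φ (Pi.single s 1) u * φ (Pi.single t 1) v * (A s t * x s * x t)
          = ∑ s, ∑ t, A s t * φ (Pi.single s 1) u * φ (Pi.single t 1) v * x s * x t :=
            Finset.sum_congr rfl fun s _ => Finset.sum_congr rfl fun t _ => by ring
        _ = A' u v * φ x u * φ x v := key
        _ = φ x u * φ x v * A' u v := by ring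
    · simp only [if_neg h2, zero_mul, mul_zero, Finset.sum_const_zero]
  · simp only [if_neg h1, zero_mul, Finset.sum_const_zero]
end Aux5

/-- Proposition 3.8 (1): decloning of surjective LV morphisms. -/
theorem stmt10 {𝔽 S S' : Type*} [RCLike 𝔽] [Fintype S] [Fintype S']
    (A : S → S → 𝔽) (A' : S' → S' → 𝔽)
    (hA : ∀ s t, A s t = -A t s) (hA' : ∀ s t, A' s t = -A' t s)
    (φ : (S → 𝔽) →ₗ[𝔽] (S' → 𝔽)) (hφ : IsLVMorphism A A' φ)
    (hsurj : Function.Surjective φ) :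
    (∃! ψ : (Quotient (declSetoid A) → 𝔽) →ₗ[𝔽] (Quotient (declSetoid A') → 𝔽),
        ∀ x : S → 𝔽,
          lvExt 𝔽 (Quotient.mk (declSetoid A')) (φ x)
            = ψ (lvExt 𝔽 (Quotient.mk (declSetoid A)) x)) ∧
    ∀ ψ : (Quotient (declSetoid A) → 𝔽) →ₗ[𝔽] (Quotient (declSetoid A') → 𝔽),
      (∀ x : S → 𝔽,
          lvExt 𝔽 (Quotient.mk (declSetoid A')) (φ x)
            = ψ (lvExt 𝔽 (Quotient.mk (declSetoid A)) x)) →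
      Function.Surjective ψ ∧ IsLVMorphism (declAdj A hA) (declAdj A' hA') ψ := by
  have hP : ∀ x : S → 𝔽, lvExt 𝔽 (Quotient.mk (declSetoid A')) (φ x)
      = (lvExt 𝔽 (Quotient.mk (declSetoid A')) ∘ₗ φ ∘ₗ sect 𝔽 (declSetoid A))
          (lvExt 𝔽 (Quotient.mk (declSetoid A)) x) := by
    intro x
    simp only [LinearMap.comp_apply]
    set d := sect 𝔽 (declSetoid A) (lvExt 𝔽 (Quotient.mk (declSetoid A)) x) - x with hd
    have hd0 : lvExt 𝔽 (Quotient.mk (declSetoid A)) d = 0 := by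
      rw [hd, map_sub, sect_section, sub_self]
    have hx' : ∀ q, ∑ u, (if Quotient.mk (declSetoid A) u = q then d u else 0) = 0 := by
      intro q
      rw [← lvExt_apply (Quotient.mk (declSetoid A)) d q, hd0]
      rfl
    have h0 := key_ker A A' hA φ hφ hsurj d hx'
    have h0' : lvExt 𝔽 (Quotient.mk (declSetoid A')) (φ d) = 0 := by
      funext q'
      rw [lvExt_apply, h0 q']
      rfl
    rw [hd, map_sub, map_sub, sub_eq_zero] at h0'
    exact h0'.symm
  constructor
  · refine ⟨lvExt 𝔽 (Quotient.mk (declSetoid A')) ∘ₗ φ ∘ₗ sect 𝔽 (declSetoid A), hP, ?_⟩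
    intro ψ hψ
    refine LinearMap.ext fun X => ?_
    conv_lhs => rw [← sect_section (declSetoid A) X]
    rw [← hψ, hP, sect_section]
  · intro ψ hψ
    have hψX : ∀ x : S → 𝔽, ψ (lvExt 𝔽 (Quotient.mk (declSetoid A)) x)
        = lvExt 𝔽 (Quotient.mk (declSetoid A')) (φ x) := fun x => (hψ x).symm
    refine ⟨?_, ?_, ?_⟩
    · -- surjectivity
      intro Y
      obtain ⟨x, hx⟩ := hsurj (sect 𝔽 (declSetoid A') Y)
      exact ⟨lvExt 𝔽 (Quotient.mk (declSetoid A)) x, by rw [hψX x, hx, sect_section]⟩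
    · -- condition (i)
      intro c c' X
      set x := sect 𝔽 (declSetoid A) X with hxdef
      have hX : lvExt 𝔽 (Quotient.mk (declSetoid A)) x = X := by
        rw [hxdef]; exact sect_section _ X
      have hsing : ∀ q : Quotient (declSetoid A), ψ (Pi.single q 1)
          = lvExt 𝔽 (Quotient.mk (declSetoid A')) (φ (Pi.single (Quotient.out q) 1)) := by
        intro q
        have h1 : lvExt 𝔽 (Quotient.mk (declSetoid A)) (Pi.single (Quotient.out q) 1)
            = Pi.single q 1 := by
          rw [lvExt_single, Quotient.out_eq]
        rw [← h1, hψX]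
      have hc : ∀ q : Quotient (declSetoid A), ψ (Pi.single q 1) c
          = ∑ u, if Quotient.mk (declSetoid A') u = c
              then φ (Pi.single (Quotient.out q) 1) u else 0 := by
        intro q
        rw [hsing q, lvExt_apply]
      have hc' : ∀ q : Quotient (declSetoid A), ψ (Pi.single q 1) c'
          = ∑ v, if Quotient.mk (declSetoid A') v = c'
              then φ (Pi.single (Quotient.out q) 1) v else 0 := by
        intro q
        rw [hsing q, lvExt_apply]
      have hXc : ψ X c = ∑ u, if Quotient.mk (declSetoid A') u = c then φ x u else 0 := by
        rw [← hX, hψX, lvExt_apply]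
      have hXc' : ψ X c' = ∑ v, if Quotient.mk (declSetoid A') v = c' then φ x v else 0 := by
        rw [← hX, hψX, lvExt_apply]
      have ci := cond_i A A' hA hA' φ hφ hsurj c c' x
      rw [hX] at ci
      rw [hXc, hXc']
      have e : ∀ q q'' : Quotient (declSetoid A),
          declAdj A hA q q'' * ψ (Pi.single q 1) c * ψ (Pi.single q'' 1) c' * X q * X q''
          = declAdj A hA q q''
            * (∑ u, if Quotient.mk (declSetoid A') u = c
                then φ (Pi.single (Quotient.out q) 1) u else 0)
            * (∑ v, if Quotient.mk (declSetoid A') v = c'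
                then φ (Pi.single (Quotient.out q'') 1) v else 0)
            * X q * X q'' := by
        intro q q''
        rw [hc q, hc' q'']
      rw [Finset.sum_congr rfl fun q _ => Finset.sum_congr rfl fun q'' _ => e q q'']
      exact ci
    · -- condition (ii)
      intro X
      set x := sect 𝔽 (declSetoid A) X with hxdef
      have hX : lvExt 𝔽 (Quotient.mk (declSetoid A)) x = X := by
        rw [hxdef]; exact sect_section _ X
      calc ∑ q', ψ X q'
          = ∑ q', lvExt 𝔽 (Quotient.mk (declSetoid A')) (φ x) q' := by rw [← hX, hψX]
        _ = ∑ q', ∑ u, (if Quotient.mk (declSetoid A') u = q' then φ x u else 0) :=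
            Finset.sum_congr rfl fun q' _ => lvExt_apply _ _ _
        _ = ∑ u, φ x u := sumP _ _
        _ = ∑ s, x s := hφ.2 x
        _ = ∑ q, ∑ s, (if Quotient.mk (declSetoid A) s = q then x s else 0) := (sumP _ _).symm
        _ = ∑ q, lvExt 𝔽 (Quotient.mk (declSetoid A)) x q :=
            Finset.sum_congr rfl fun q _ => (lvExt_apply _ _ _).symm
        _ = ∑ q, X q := by rw [hX]
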